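/- Let A be a perfect MV-algebra. If ¬x ≤ x and ¬y ≤ y, then x ⊕ y = 1. -/

import Mathlib

/-- An MV-algebra `(A, ⊕, ¬, 0)`. -/
class MV (A : Type*) where
  op : A → A → A
  neg : A → A
  zero : A
  op_assoc : ∀ x y z : A, op (op x y) z = op x (op y z)
  op_comm : ∀ x y : A, op x y = op y x
  op_zero : ∀ x : A, op x zero = x
  neg_neg : ∀ x : A, neg (neg x) = x
  op_neg_zero : ∀ x : A, op x (neg zero) = neg zero
  mv6 : ∀ x y : A, op (neg (op (neg x) y)) y = op (neg (op (neg y) x)) x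

namespace MV

variable {A : Type*} [MV A]

/-- `1 := ¬0`. -/
def one : A := neg zero

/-- `x ⊙ y := ¬(¬x ⊕ ¬y)`. -/
def odot (x y : A) : A := neg (op (neg x) (neg y))

/-- `sup(x,y) := (x ⊙ ¬y) ⊕ y`. -/
def ssup (x y : A) : A := op (odot x (neg y)) y

/-- `inf(x,y) := (x ⊕ ¬y) ⊙ y`. -/
def sinf (x y : A) : A := odot (op x (neg y)) y

/-- `x ≤ y` iff `¬x ⊕ y = 1`. -/
def le (x y : A) : Prop := op (neg x) y = one

/-- `x ≤ y` iff `inf(x,y) = x`. -/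
def leInf (x y : A) : Prop := sinf x y = x

/-- `n`-fold sum `nx = x ⊕ ⋯ ⊕ x`. -/
def nsm : ℕ → A → A
  | 0, _ => zero
  | n + 1, x => op x (nsm n x)

/-- `x² := x ⊙ x`. -/
def sq (x : A) : A := odot x x

end MV

namespace MV

/-- A perfect MV-algebra: nontrivial, satisfying `x² ⊕ x² = (x ⊕ x)²` and,
for every `x`, either `x ≤ ¬x` or `¬x ≤ x`. -/
def Perfect (A : Type*) [MV A] : Prop :=
  (zero : A) ≠ one ∧
  (∀ x : A, op (sq x) (sq x) = sq (op x x)) ∧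
  (∀ x : A, le x (neg x) ∨ le (neg x) x)

end MV

/-! Write `a = ¬x`, `b = ¬y`; then `a² = b² = 0` and the claim is `a ⊙ b = 0`. The supremum
`m = a ∨ b` satisfies `m² ≤ a² ∨ (a ⊙ b) ∨ b² = a ⊙ b`, and `m` is either radical (`m² = 0`) or
coradical (`m ⊕ m = 1`). If `m² = 0` then `a ⊙ b ≤ m² = 0`. If `m ⊕ m = 1`, the identity
`m² ⊕ m² = (m ⊕ m)² = 1` forces `c ⊕ c = 1` for `c = a ⊙ b`, while `c² ≤ a² = 0`; but in a perfect
MV-algebra no `c` has both `c² = 0` and `c ⊕ c = 1`, since then `0 = c² ⊕ c² = (c ⊕ c)² = 1`. -/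

namespace MV

variable {A : Type*} [MV A] {x y z w : A}

instance : Std.Associative (op : A → A → A) := ⟨op_assoc⟩
instance : Std.Commutative (op : A → A → A) := ⟨op_comm⟩

lemma zero_op (x : A) : op zero x = x := by rw [op_comm, op_zero]

lemma op_one (x : A) : op x (one : A) = one := op_neg_zero x

lemma neg_one : neg (one : A) = zero := neg_neg zero

lemma op_neg_self (x : A) : op (neg x) x = one := by
  simpa only [neg_one, zero_op, op_one] using mv6 (one : A) x

lemma neg_odot (x y : A) : neg (odot x y) = op (neg x) (neg y) := neg_neg _

lemma sq_one : sq (one : A) = one := by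
  rw [sq, odot, neg_one, op_zero]
  rfl

lemma le_neg_self_iff : le x (neg x) ↔ sq x = zero := by
  rw [le, sq, odot, ← neg_one]
  exact ⟨congrArg neg, fun h => by simpa only [neg_neg] using congrArg neg h⟩

lemma neg_le_self_iff : le (neg x) x ↔ op x x = one := by
  rw [le, neg_neg]

lemma le.refl (x : A) : le x x := op_neg_self x

lemma le_one (x : A) : le x one := op_one _

lemma zero_le (x : A) : le zero x := by
  rw [le, op_comm]
  exact op_neg_zero x

lemma le_op_self (t x : A) : le x (op t x) := by
  rw [le, ← op_assoc, op_comm _ t, op_assoc, op_neg_self, op_one]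

lemma le_self_op (x t : A) : le x (op x t) := by
  rw [op_comm]
  exact le_op_self t x

lemma exists_op_eq_of_le (h : le x y) : ∃ s, op s x = y :=
  ⟨_, by rw [mv6, h, neg_one, zero_op]⟩

lemma le.antisymm (h₁ : le x y) (h₂ : le y x) : x = y := by
  have h := mv6 x y
  rwa [h₁, h₂, neg_one, zero_op, zero_op, eq_comm] at h

lemma op_le_op (h₁ : le x y) (h₂ : le z w) : le (op x z) (op y w) := by
  obtain ⟨s, rfl⟩ := exists_op_eq_of_le h₁
  obtain ⟨t, rfl⟩ := exists_op_eq_of_le h₂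
  calc op (neg (op x z)) (op (op s x) (op t z)) = op s (op t (op (neg (op x z)) (op x z))) := by
        ac_rfl
    _ = one := by rw [op_neg_self, op_one, op_one]

lemma le.neg (h : le x y) : le (neg y) (neg x) := by
  rwa [le, neg_neg, op_comm]

lemma odot_le_odot (h₁ : le x y) (h₂ : le z w) : le (odot x z) (odot y w) :=
  (op_le_op h₁.neg h₂.neg).neg

lemma odot_comm (x y : A) : odot x y = odot y x := by
  rw [odot, odot, op_comm]

lemma odot_le_left (x y : A) : le (odot x y) x := by
  rw [odot]
  simpa only [neg_neg] using (le_self_op (neg x) (neg y)).neg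

lemma sq_le_sq (h : le x y) : le (sq x) (sq y) := odot_le_odot h h

lemma eq_zero_of_le_zero (h : le x zero) : x = zero := h.antisymm (zero_le x)

lemma eq_one_of_one_le (h : le one x) : x = one := (le_one x).antisymm h

lemma odot_le_iff_le_neg_op : le (odot x y) z ↔ le x (op (neg y) z) := by
  rw [le, le, neg_odot, op_assoc]

lemma ssup_eq (x y : A) : ssup x y = op (neg (op (neg x) y)) y := by
  rw [ssup, odot, neg_neg]

lemma ssup_comm (x y : A) : ssup x y = ssup y x := by
  rw [ssup_eq, ssup_eq, mv6]

lemma le_ssup_right (x y : A) : le y (ssup x y) := by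
  rw [ssup_eq]
  exact le_op_self _ y

lemma le_ssup_left (x y : A) : le x (ssup x y) := by
  rw [ssup_comm]
  exact le_ssup_right y x

lemma ssup_eq_right (h : le x y) : ssup x y = y := by
  rw [ssup_eq, h, neg_one, zero_op]

lemma ssup_le (hx : le x z) (hy : le y z) : le (ssup x y) z := by
  have h : le (ssup x y) (ssup z y) := op_le_op (odot_le_odot hx (le.refl _)) (le.refl y)
  rwa [ssup_comm z, ssup_eq_right hy] at h

lemma ssup_odot_le (hx : le (odot x z) w) (hy : le (odot y z) w) : le (odot (ssup x y) z) w :=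
  odot_le_iff_le_neg_op.2 <|
    ssup_le (odot_le_iff_le_neg_op.1 hx) (odot_le_iff_le_neg_op.1 hy)

lemma sq_ssup_le_odot (hx : sq x = zero) (hy : sq y = zero) : le (sq (ssup x y)) (odot x y) := by
  have hxy : le (odot x (ssup x y)) (odot x y) := by
    rw [odot_comm]
    exact ssup_odot_le (by rw [← sq, hx]; exact zero_le _) (by rw [odot_comm]; exact le.refl _)
  have hyy : le (odot y (ssup x y)) (odot x y) := by
    rw [odot_comm]
    exact ssup_odot_le (le.refl _) (by rw [← sq, hy]; exact zero_le _)
  exact ssup_odot_le hxy hyy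

lemma Perfect.op_self_ne_one (hA : Perfect A) (h : sq x = zero) : op x x ≠ one := by
  intro h₁
  have h₂ := hA.2.1 x
  rw [h, h₁, op_zero, sq_one] at h₂
  exact hA.1 h₂

lemma Perfect.odot_eq_zero (hA : Perfect A) (hx : sq x = zero) (hy : sq y = zero) :
    odot x y = zero := by
  rcases hA.2.2 (ssup x y) with hm | hm
  · rw [le_neg_self_iff] at hm
    refine eq_zero_of_le_zero ?_
    rw [← hm]
    exact odot_le_odot (le_ssup_left x y) (le_ssup_right x y)
  · rw [neg_le_self_iff] at hm
    have hsq : op (sq (ssup x y)) (sq (ssup x y)) = one := by rw [hA.2.1, hm, sq_one]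
    have hc : op (odot x y) (odot x y) = one := eq_one_of_one_le <| by
      rw [← hsq]
      exact op_le_op (sq_ssup_le_odot hx hy) (sq_ssup_le_odot hx hy)
    have hc₀ : sq (odot x y) = zero := eq_zero_of_le_zero <| hx ▸ sq_le_sq (odot_le_left x y)
    exact absurd hc (hA.op_self_ne_one hc₀)

end MV

open MV in
/-- In a perfect MV-algebra, if `¬x ≤ x` and `¬y ≤ y` then `x ⊕ y = 1`. -/
theorem perfect_coradical_op_one {A : Type*} [MV A] (hA : Perfect A) :
    ∀ x y : A, le (neg x) x → le (neg y) y → op x y = one := by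
  intro x y hx hy
  have hx' : sq (neg x) = zero := le_neg_self_iff.1 (by rwa [MV.neg_neg])
  have hy' : sq (neg y) = zero := le_neg_self_iff.1 (by rwa [MV.neg_neg])
  have h := congrArg neg (hA.odot_eq_zero hx' hy')
  rwa [neg_odot, MV.neg_neg, MV.neg_neg] at h
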